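/- Let f : C → Set A be an atomized model and φ ∈ A an atom. Call φ redundant in f if for every constant c with φ ∈ f c there exists an atom η ∈ f c with η ≠ φ such that φ is larger than η (for every constant d, η ∈ f d implies φ ∈ f d). Let f' be the model obtained by eliminating φ, i.e. f' c = f c \ {φ} for every constant c. Then f' satisfies exactly the same positive relations between terms as f (for all terms s, t over C, f' satisfies s ≤ t iff f satisfies s ≤ t) if and only if φ is redundant in f. (An atom can be eliminated without altering the model if and only if it is redundant.) -/

import Mathlib

/-- The atom set of a term (set of constants) `t` under the atomized model `f`. -/
def atomSet {C A : Type*} (f : C → Set A) (t : Set C) : Set A := ⋃ c ∈ t, f c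

/-- The atomized model `f` satisfies the positive relation `s ≤ t`. -/
def Sat {C A : Type*} (f : C → Set A) (s t : Set C) : Prop := atomSet f s ⊆ atomSet f t

/-!
Removing `φ` changes only the atom sets that contain `φ`, and only by `φ` itself; so a relation
`s ≤ t` can be created by the elimination only when `φ` is the sole atom of `s` missing from `t`.
Redundancy rules this out: a constant `c ∈ s` with `φ ∈ f c` also carries a smaller atom `η ≠ φ`,
which survives the elimination, so some `d ∈ t` contains `η` and hence `φ`. Conversely, if `φ` is
not redundant at `c`, every other atom of `c` lies in a constant not containing `φ`; after the
elimination `{c}` is below the term of all such constants, which fails before it.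
-/

section

variable {C A : Type*}

@[simp]
lemma mem_atomSet {f : C → Set A} {t : Set C} {x : A} :
    x ∈ atomSet f t ↔ ∃ c ∈ t, x ∈ f c := by
  simp [atomSet]

lemma atomSet_sdiff_singleton (f : C → Set A) (φ : A) (t : Set C) :
    atomSet (fun c => f c \ {φ}) t = atomSet f t \ {φ} := by
  simp only [atomSet, Set.iUnion_sdiff]

lemma sat_sdiff_singleton_iff {f : C → Set A} {φ : A} {s t : Set C} :
    Sat (fun c => f c \ {φ}) s t ↔ atomSet f s \ {φ} ⊆ atomSet f t := by
  rw [Sat, atomSet_sdiff_singleton, atomSet_sdiff_singleton]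
  exact ⟨fun h => h.trans Set.sdiff_subset, fun h x hx => ⟨h hx, hx.2⟩⟩

lemma Sat.sdiff_singleton {f : C → Set A} {s t : Set C} (h : Sat f s t) (φ : A) :
    Sat (fun c => f c \ {φ}) s t := by
  rw [Sat, atomSet_sdiff_singleton, atomSet_sdiff_singleton]
  exact Set.sdiff_subset_sdiff_left h

def IsRedundant (f : C → Set A) (φ : A) : Prop :=
  ∀ c, φ ∈ f c → ∃ η ∈ f c, η ≠ φ ∧ ∀ d, η ∈ f d → φ ∈ f d

lemma IsRedundant.sat_of_sat_sdiff {f : C → Set A} {φ : A} (hφ : IsRedundant f φ)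
    {s t : Set C} (h : Sat (fun c => f c \ {φ}) s t) : Sat f s t := by
  rw [sat_sdiff_singleton_iff] at h
  intro x hx
  by_cases hxφ : x = φ
  · subst hxφ
    obtain ⟨c, hcs, hxc⟩ := mem_atomSet.1 hx
    obtain ⟨η, hηc, hηx, hη⟩ := hφ c hxc
    obtain ⟨d, hdt, hηd⟩ := mem_atomSet.1 (h ⟨mem_atomSet.2 ⟨c, hcs, hηc⟩, hηx⟩)
    exact mem_atomSet.2 ⟨d, hdt, hη d hηd⟩
  · exact h ⟨hx, hxφ⟩

lemma isRedundant_of_sat_sdiff_imp_sat {f : C → Set A} {φ : A}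
    (h : ∀ s t, Sat (fun c => f c \ {φ}) s t → Sat f s t) : IsRedundant f φ := by
  intro c hφc
  by_contra! hc
  have hsat : Sat (fun c => f c \ {φ}) {c} {d | φ ∉ f d} := by
    rw [sat_sdiff_singleton_iff]
    rintro η ⟨hη, hηφ⟩
    obtain ⟨c', rfl, hηc⟩ := mem_atomSet.1 hη
    obtain ⟨d, hηd, hφd⟩ := hc η hηc hηφ
    exact mem_atomSet.2 ⟨d, hφd, hηd⟩
  obtain ⟨d, hφ_notMem, hφ_mem⟩ := mem_atomSet.1 (h _ _ hsat (mem_atomSet.2 ⟨c, rfl, hφc⟩))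
  exact hφ_notMem hφ_mem

end

/-- An atom `φ` can be eliminated from an atomized model `f` without
altering the positive relations between terms if and only if `φ` is redundant:
for every constant `c` containing `φ` there is another atom `η ∈ f c`, `η ≠ φ`, with
`φ` larger than `η`. -/
theorem eliminate_atom_iff_redundant {C A : Type*} (f : C → Set A) (φ : A)
    (f' : C → Set A) (hf' : ∀ c, f' c = f c \ {φ}) :
    (∀ s t : Set C, Sat f' s t ↔ Sat f s t) ↔
      (∀ c : C, φ ∈ f c → ∃ η ∈ f c, η ≠ φ ∧ ∀ d : C, η ∈ f d → φ ∈ f d) := by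
  obtain rfl : f' = fun c => f c \ {φ} := funext hf'
  exact ⟨fun h => isRedundant_of_sat_sdiff_imp_sat fun s t => (h s t).1,
    fun hφ s t => ⟨IsRedundant.sat_of_sat_sdiff hφ, fun h => h.sdiff_singleton φ⟩⟩
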